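/- There exists a unique magnetic representation ρ of the magnetic group (ℤ/4, mod 2) on ℂ² with ρ(1) = [[0, −1], [1, 0]], and this magnetic representation is irreducible with End_{(ℤ/4, mod 2)}(ρ) isomorphic to the quaternions ℍ as an ℝ-algebra. -/

import Mathlib

open Matrix

noncomputable section

/-- Entrywise complex conjugation of a complex matrix. -/
def conjMat {m n : ℕ} (M : Matrix (Fin m) (Fin n) ℂ) : Matrix (Fin m) (Fin n) ℂ :=
  M.map (starRingEnd ℂ)

/-- Entrywise complex conjugation of a vector in `ℂⁿ`. -/
def conjVec {n : ℕ} (v : Fin n → ℂ) : Fin n → ℂ :=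
  fun i => starRingEnd ℂ (v i)

/-- `σ^ε` on matrices, for `ε : ℤ/2` (written multiplicatively). -/
def sigmaPow {m n : ℕ} (ε : Multiplicative (ZMod 2)) (M : Matrix (Fin m) (Fin n) ℂ) :
    Matrix (Fin m) (Fin n) ℂ :=
  if ε = 1 then M else conjMat M

/-- `σ^ε` on vectors. -/
def sigmaPowVec {n : ℕ} (ε : Multiplicative (ZMod 2)) (v : Fin n → ℂ) : Fin n → ℂ :=
  if ε = 1 then v else conjVec v

/-- A magnetic representation of the magnetic group `(G, φ)` on `ℂⁿ`:
`ρ (g * h) = ρ g * σ^(φ g) (ρ h)`. -/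
def IsMagneticRep {G : Type*} [Group G] (φ : G →* Multiplicative (ZMod 2)) {n : ℕ}
    (ρ : G → Matrix.GeneralLinearGroup (Fin n) ℂ) : Prop :=
  ∀ g h : G, (ρ (g * h) : Matrix (Fin n) (Fin n) ℂ) =
    (ρ g : Matrix (Fin n) (Fin n) ℂ) * sigmaPow (φ g) (ρ h : Matrix (Fin n) (Fin n) ℂ)

/-- A morphism of magnetic representations from `ρ₁` to `ρ₂`. -/
def IsMagMorphism {G : Type*} [Group G] (φ : G →* Multiplicative (ZMod 2)) {n m : ℕ}
    (ρ₁ : G → Matrix.GeneralLinearGroup (Fin n) ℂ)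
    (ρ₂ : G → Matrix.GeneralLinearGroup (Fin m) ℂ)
    (T : Matrix (Fin m) (Fin n) ℂ) : Prop :=
  ∀ g : G, T * (ρ₁ g : Matrix (Fin n) (Fin n) ℂ) =
    (ρ₂ g : Matrix (Fin m) (Fin m) ℂ) * sigmaPow (φ g) T

/-- A `ℂ`-subspace invariant under a magnetic representation. -/
def MagInvariant {G : Type*} [Group G] (φ : G →* Multiplicative (ZMod 2)) {n : ℕ}
    (ρ : G → Matrix.GeneralLinearGroup (Fin n) ℂ) (W : Submodule ℂ (Fin n → ℂ)) : Prop :=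
  ∀ g : G, ∀ w ∈ W, (ρ g : Matrix (Fin n) (Fin n) ℂ).mulVec (sigmaPowVec (φ g) w) ∈ W

/-- An irreducible magnetic representation. -/
def IsIrredMagRep {G : Type*} [Group G] (φ : G →* Multiplicative (ZMod 2)) {n : ℕ}
    (ρ : G → Matrix.GeneralLinearGroup (Fin n) ℂ) : Prop :=
  (⊥ : Submodule ℂ (Fin n → ℂ)) ≠ ⊤ ∧
    ∀ W : Submodule ℂ (Fin n → ℂ), MagInvariant φ ρ W → W = ⊥ ∨ W = ⊤

/-- Irreducibility of a classical (complex linear) representation given by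
a family of invertible matrices. -/
def IsClassIrreducible {H : Type*} {n : ℕ}
    (ρ : H → Matrix.GeneralLinearGroup (Fin n) ℂ) : Prop :=
  (⊥ : Submodule ℂ (Fin n → ℂ)) ≠ ⊤ ∧
    ∀ W : Submodule ℂ (Fin n → ℂ),
      (∀ h : H, ∀ w ∈ W, (ρ h : Matrix (Fin n) (Fin n) ℂ).mulVec w ∈ W) → W = ⊥ ∨ W = ⊤

theorem sq_mem {G : Type*} [Group G] (φ : G →* Multiplicative (ZMod 2)) (a : G) :
    a * a ∈ φ.ker := by
  have h2 : ∀ x : Multiplicative (ZMod 2), x * x = 1 := by decide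
  simp [MonoidHom.mem_ker, _root_.map_mul, h2]

/-- `g ↦ a⁻¹ g a` as a map `G₀ → G₀` for `G₀ = ker φ`. -/
def kerConj {G : Type*} [Group G] (φ : G →* Multiplicative (ZMod 2)) (a : G) (g : φ.ker) :
    φ.ker :=
  ⟨a⁻¹ * g * a, by
    have hg : φ g = 1 := g.2
    simp [MonoidHom.mem_ker, _root_.map_mul, map_inv, hg]⟩

/-- Entrywise conjugation as a map `GL(n, ℂ) → GL(n, ℂ)`. -/
def conjGL {n : ℕ} (A : Matrix.GeneralLinearGroup (Fin n) ℂ) :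
    Matrix.GeneralLinearGroup (Fin n) ℂ :=
  Units.map (RingHom.toMonoidHom (RingHom.mapMatrix (starRingEnd ℂ))) A

theorem conjGL_conjGL {n : ℕ} (A : Matrix.GeneralLinearGroup (Fin n) ℂ) :
    conjGL (conjGL A) = A := by
  apply Units.ext
  ext i j
  simp [conjGL]

theorem conjMat_mul {l m n : ℕ} (M : Matrix (Fin l) (Fin m) ℂ) (N : Matrix (Fin m) (Fin n) ℂ) :
    conjMat (M * N) = conjMat M * conjMat N := by
  ext i j
  simp [conjMat, Matrix.mul_apply, map_sum]

theorem conjMat_add {m n : ℕ} (M N : Matrix (Fin m) (Fin n) ℂ) :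
    conjMat (M + N) = conjMat M + conjMat N := by
  ext i j
  simp [conjMat]

theorem sigmaPow_mul {l m n : ℕ} (ε : Multiplicative (ZMod 2))
    (M : Matrix (Fin l) (Fin m) ℂ) (N : Matrix (Fin m) (Fin n) ℂ) :
    sigmaPow ε (M * N) = sigmaPow ε M * sigmaPow ε N := by
  unfold sigmaPow
  split
  · rfl
  · exact conjMat_mul M N

theorem sigmaPow_add {m n : ℕ} (ε : Multiplicative (ZMod 2))
    (M N : Matrix (Fin m) (Fin n) ℂ) :
    sigmaPow ε (M + N) = sigmaPow ε M + sigmaPow ε N := by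
  unfold sigmaPow
  split
  · rfl
  · exact conjMat_add M N

/-- The `ℝ`-algebra of endomorphisms of a magnetic representation. -/
def MagEnd {G : Type*} [Group G] (φ : G →* Multiplicative (ZMod 2)) {n : ℕ}
    (ρ : G → Matrix.GeneralLinearGroup (Fin n) ℂ) :
    Subalgebra ℝ (Matrix (Fin n) (Fin n) ℂ) where
  carrier := {T | ∀ g : G, T * (ρ g : Matrix (Fin n) (Fin n) ℂ) =
      (ρ g : Matrix (Fin n) (Fin n) ℂ) * sigmaPow (φ g) T}
  mul_mem' := by
    intro T S hT hS g
    rw [mul_assoc, hS g, ← mul_assoc, hT g, mul_assoc, sigmaPow_mul]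
  add_mem' := by
    intro T S hT hS g
    rw [add_mul, hT g, hS g, sigmaPow_add, mul_add]
  algebraMap_mem' := by
    intro r g
    have hσ : sigmaPow (φ g) (algebraMap ℝ (Matrix (Fin n) (Fin n) ℂ) r) =
        algebraMap ℝ (Matrix (Fin n) (Fin n) ℂ) r := by
      unfold sigmaPow conjMat
      split
      · rfl
      · ext i j
        simp [Matrix.algebraMap_matrix_apply, apply_ite (starRingEnd ℂ)]
    rw [hσ, Algebra.commutes]

/-- `(n+n) × (n+n)` block matrix built out of four `n × n` blocks. -/
def blocks {n : ℕ} (A B C D : Matrix (Fin n) (Fin n) ℂ) :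
    Matrix (Fin (n + n)) (Fin (n + n)) ℂ :=
  Matrix.reindex finSumFinEquiv finSumFinEquiv (Matrix.fromBlocks A B C D)

/-- The matrix of the inclusion `ℂⁿ → ℂ^{n+n}` of the first block. -/
def iotaMat (n : ℕ) : Matrix (Fin (n + n)) (Fin n) ℂ :=
  Matrix.reindex finSumFinEquiv (Equiv.refl (Fin n))
    (Matrix.fromRows (1 : Matrix (Fin n) (Fin n) ℂ) (0 : Matrix (Fin n) (Fin n) ℂ))


/-- The mod-2 reduction `ℤ/4 → ℤ/2`, written multiplicatively. -/
def modTwoHom4 : Multiplicative (ZMod 4) →* Multiplicative (ZMod 2) :=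
  AddMonoidHom.toMultiplicative ((ZMod.castHom (by norm_num : (2 : ℕ) ∣ 4) (ZMod 2)).toAddMonoidHom)


abbrev Jm : Matrix (Fin 2) (Fin 2) ℂ := !![0,-1;1,0]

lemma Jm_mul_Jm : Jm * Jm = -1 := by
  ext i j
  fin_cases i <;> fin_cases j <;> simp [Matrix.mul_apply, Fin.sum_univ_two]

def uJ : Matrix.GeneralLinearGroup (Fin 2) ℂ :=
  ⟨Jm, -Jm, by rw [mul_neg, Jm_mul_Jm, neg_neg], by rw [neg_mul, Jm_mul_Jm, neg_neg]⟩

lemma Jm_pow4 : Jm ^ 4 = 1 := by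
  rw [show (4:ℕ) = 2+2 from rfl, pow_add, sq, Jm_mul_Jm, neg_mul_neg, one_mul]

lemma conjMat_Jm_pow (k : ℕ) : conjMat (Jm ^ k) = Jm ^ k := by
  have h1 : conjMat (Jm ^ k) = (RingHom.mapMatrix (starRingEnd ℂ)) (Jm ^ k) := rfl
  rw [h1, map_pow]
  congr 1
  ext i j
  fin_cases i <;> fin_cases j <;> simp

lemma sigmaPow_Jm_pow (ε : Multiplicative (ZMod 2)) (k : ℕ) :
    sigmaPow ε (Jm ^ k) = Jm ^ k := by
  unfold sigmaPow; split
  · rfl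
  · exact conjMat_Jm_pow k

def rho : Multiplicative (ZMod 4) → Matrix.GeneralLinearGroup (Fin 2) ℂ :=
  fun g => uJ ^ (Multiplicative.toAdd g).val

lemma rho_coe (g : Multiplicative (ZMod 4)) :
    (rho g : Matrix (Fin 2) (Fin 2) ℂ) = Jm ^ (Multiplicative.toAdd g).val := by
  simp [rho, uJ]

lemma rho_isMag : IsMagneticRep modTwoHom4 rho := by
  intro g h
  rw [rho_coe, rho_coe, rho_coe, sigmaPow_Jm_pow]
  have : Multiplicative.toAdd (g * h) = Multiplicative.toAdd g + Multiplicative.toAdd h := rfl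
  rw [this, ZMod.val_add, ← pow_add, ← pow_eq_pow_mod _ Jm_pow4]

lemma rho_unique (ρ' : Multiplicative (ZMod 4) → Matrix.GeneralLinearGroup (Fin 2) ℂ)
    (hmag : IsMagneticRep modTwoHom4 ρ')
    (h1 : (ρ' (Multiplicative.ofAdd 1) : Matrix (Fin 2) (Fin 2) ℂ) = !![0, -1; 1, 0]) :
    ρ' = rho := by
  have hid : ρ' 1 = 1 := by
    have := hmag 1 1
    rw [one_mul] at this
    have hφ : modTwoHom4 (1 : Multiplicative (ZMod 4)) = 1 := by decide
    rw [hφ] at this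
    simp only [sigmaPow, if_pos rfl] at this
    have : (ρ' 1) * 1 = (ρ' 1) * (ρ' 1) := by
      rw [mul_one]; exact_mod_cast Units.ext this
    exact (mul_left_cancel this).symm
  have hφ1 : modTwoHom4 (Multiplicative.ofAdd (1 : ZMod 4)) ≠ 1 := by decide
  have h2 : (ρ' (Multiplicative.ofAdd (2 : ZMod 4)) : Matrix (Fin 2) (Fin 2) ℂ) = -1 := by
    have := hmag (Multiplicative.ofAdd 1) (Multiplicative.ofAdd 1)
    have he : Multiplicative.ofAdd (1 : ZMod 4) * Multiplicative.ofAdd 1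
        = Multiplicative.ofAdd 2 := by decide
    rw [he, h1] at this
    rw [this]
    simp only [sigmaPow, if_neg hφ1, h1]
    rw [show conjMat !![(0:ℂ),-1;1,0] = !![0,-1;1,0] by
      ext i j; fin_cases i <;> fin_cases j <;> simp [conjMat]]
    exact Jm_mul_Jm
  have h3 : (ρ' (Multiplicative.ofAdd (3 : ZMod 4)) : Matrix (Fin 2) (Fin 2) ℂ) = -Jm := by
    have := hmag (Multiplicative.ofAdd 1) (Multiplicative.ofAdd 2)
    have he : Multiplicative.ofAdd (1 : ZMod 4) * Multiplicative.ofAdd 2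
        = Multiplicative.ofAdd 3 := by decide
    rw [he, h1, h2] at this
    rw [this]
    simp only [sigmaPow, if_neg hφ1]
    rw [show conjMat (-1 : Matrix (Fin 2) (Fin 2) ℂ) = -1 by
      ext i j; fin_cases i <;> fin_cases j <;> simp [conjMat, Matrix.one_apply]]
    rw [mul_neg, mul_one]
  funext g
  have hcases : ∀ z : ZMod 4, z = 0 ∨ z = 1 ∨ z = 2 ∨ z = 3 := by decide
  have hg := hcases (Multiplicative.toAdd g)
  apply Units.ext
  have hgeq : g = Multiplicative.ofAdd (Multiplicative.toAdd g) := rfl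
  rcases hg with h | h | h | h
  · rw [hgeq, h, rho_coe, show ((Multiplicative.toAdd (Multiplicative.ofAdd (0:ZMod 4))).val) = 0 by decide,
      pow_zero, show Multiplicative.ofAdd (0:ZMod 4) = 1 from rfl, hid, Units.val_one]
  · rw [hgeq, h, rho_coe, show ((Multiplicative.toAdd (Multiplicative.ofAdd (1:ZMod 4))).val) = 1 by decide,
      pow_one]
    exact h1
  · rw [hgeq, h, rho_coe, show ((Multiplicative.toAdd (Multiplicative.ofAdd (2:ZMod 4))).val) = 2 by decide,
      pow_two, Jm_mul_Jm]
    exact h2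
  · rw [hgeq, h, rho_coe, show ((Multiplicative.toAdd (Multiplicative.ofAdd (3:ZMod 4))).val) = 3 by decide,
      show (3:ℕ) = 2+1 from rfl, pow_succ, pow_two, Jm_mul_Jm, neg_one_mul]
    exact h3

lemma bot_ne_top2 : (⊥ : Submodule ℂ (Fin 2 → ℂ)) ≠ ⊤ := by
  intro h
  have : (![1,0] : Fin 2 → ℂ) ∈ (⊥ : Submodule ℂ (Fin 2 → ℂ)) := h ▸ Submodule.mem_top
  rw [Submodule.mem_bot] at this
  exact one_ne_zero (congrFun this 0)

lemma rho_irred : IsIrredMagRep modTwoHom4 rho := by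
  refine ⟨bot_ne_top2, ?_⟩
  intro W hW
  by_cases hbot : W = ⊥
  · exact Or.inl hbot
  right
  obtain ⟨w, hwW, hw0⟩ := (Submodule.ne_bot_iff W).mp hbot
  have hφ1 : modTwoHom4 (Multiplicative.ofAdd (1 : ZMod 4)) ≠ 1 := by decide
  have hv : Jm.mulVec (conjVec w) ∈ W := by
    have h := hW (Multiplicative.ofAdd 1) w hwW
    rw [rho_coe, show ((Multiplicative.toAdd (Multiplicative.ofAdd (1:ZMod 4))).val) = 1 by decide,
      pow_one] at h
    rwa [show sigmaPowVec (modTwoHom4 (Multiplicative.ofAdd (1:ZMod 4))) w = conjVec w by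
      unfold sigmaPowVec; rw [if_neg hφ1]] at h
  set a := w 0 with ha
  set b := w 1 with hb
  set v := Jm.mulVec (conjVec w) with hvdef
  have hv0 : v 0 = -(starRingEnd ℂ) b := by
    simp [hb, hvdef, Matrix.mulVec, dotProduct, Fin.sum_univ_two, conjVec]
  have hv1 : v 1 = (starRingEnd ℂ) a := by
    simp [ha, hvdef, Matrix.mulVec, dotProduct, Fin.sum_univ_two, conjVec]
  set s : ℂ := (starRingEnd ℂ) a * a + (starRingEnd ℂ) b * b with hs
  have hsne : s ≠ 0 := by
    intro h0
    have hre := congrArg Complex.re h0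
    simp [hs, Complex.add_re, Complex.mul_re, Complex.conj_re, Complex.conj_im] at hre
    have hare : a.re = 0 := by nlinarith [mul_self_nonneg a.re, mul_self_nonneg a.im, mul_self_nonneg b.re, mul_self_nonneg b.im]
    have haim : a.im = 0 := by nlinarith [mul_self_nonneg a.re, mul_self_nonneg a.im, mul_self_nonneg b.re, mul_self_nonneg b.im]
    have hbre : b.re = 0 := by nlinarith [mul_self_nonneg a.re, mul_self_nonneg a.im, mul_self_nonneg b.re, mul_self_nonneg b.im]
    have hbim : b.im = 0 := by nlinarith [mul_self_nonneg a.re, mul_self_nonneg a.im, mul_self_nonneg b.re, mul_self_nonneg b.im]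
    apply hw0
    funext i
    fin_cases i
    · exact Complex.ext hare haim
    · exact Complex.ext hbre hbim
  rw [eq_top_iff]
  intro u _
  have hu : u = (s⁻¹ * ((starRingEnd ℂ) a * u 0 + (starRingEnd ℂ) b * u 1)) • w
      + (s⁻¹ * (-(b * u 0) + a * u 1)) • v := by
    funext i
    fin_cases i
    · show u 0 = _ * w 0 + _ * v 0
      rw [← ha, hv0]
      field_simp
      ring
    · show u 1 = _ * w 1 + _ * v 1
      rw [← hb, hv1]
      field_simp
      ring
  rw [hu]
  exact W.add_mem (W.smul_mem _ hwW) (W.smul_mem _ hv)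

def Mi : Matrix (Fin 2) (Fin 2) ℂ := !![Complex.I, 0; 0, -Complex.I]
def Mk : Matrix (Fin 2) (Fin 2) ℂ := !![0, -Complex.I; -Complex.I, 0]

def quatBasis : QuaternionAlgebra.Basis (Matrix (Fin 2) (Fin 2) ℂ) (-1 : ℝ) (0 : ℝ) (-1 : ℝ) where
  i := Mi
  j := Jm
  k := Mk
  i_mul_i := by
    ext i j
    fin_cases i <;> fin_cases j <;>
      simp [Mi, Matrix.mul_apply, Fin.sum_univ_two, Matrix.one_apply, Complex.ext_iff]
  j_mul_j := by
    ext i j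
    fin_cases i <;> fin_cases j <;>
      simp [Matrix.mul_apply, Fin.sum_univ_two, Matrix.one_apply, Complex.ext_iff]
  i_mul_j := by
    ext i j
    fin_cases i <;> fin_cases j <;>
      simp [Mi, Mk, Matrix.mul_apply, Fin.sum_univ_two]
  j_mul_i := by
    ext i j
    fin_cases i <;> fin_cases j <;>
      simp [Mi, Mk, Matrix.mul_apply, Fin.sum_univ_two]

def fq : Quaternion ℝ →ₐ[ℝ] Matrix (Fin 2) (Fin 2) ℂ := quatBasis.liftHom

lemma fq_apply (q : Quaternion ℝ) :
    fq q = algebraMap ℝ _ q.re + q.imI • Mi + q.imJ • Jm + q.imK • Mk := rfl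

lemma fq_entries (q : Quaternion ℝ) :
    fq q = !![⟨q.re, q.imI⟩, ⟨-q.imJ, -q.imK⟩; ⟨q.imJ, -q.imK⟩, ⟨q.re, -q.imI⟩] := by
  rw [fq_apply]
  ext i j
  fin_cases i <;> fin_cases j <;>
    simp [Mi, Mk, Matrix.algebraMap_matrix_apply, Complex.ext_iff]

lemma fq_inj : Function.Injective fq := by
  intro q q' h
  rw [fq_entries, fq_entries] at h
  have h00 := congrFun (congrFun h 0) 0
  have h01 := congrFun (congrFun h 0) 1
  simp [Complex.ext_iff] at h00 h01
  ext <;> tauto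

lemma mem_magEnd_iff (T : Matrix (Fin 2) (Fin 2) ℂ) :
    T ∈ MagEnd modTwoHom4 rho ↔ T * Jm = Jm * conjMat T := by
  constructor
  · intro h
    have h1 := h (Multiplicative.ofAdd 1)
    rw [rho_coe, show ((Multiplicative.toAdd (Multiplicative.ofAdd (1:ZMod 4))).val) = 1 by decide,
      pow_one] at h1
    rwa [show sigmaPow (modTwoHom4 (Multiplicative.ofAdd (1:ZMod 4))) T = conjMat T by
      unfold sigmaPow; rw [if_neg (by decide : modTwoHom4 (Multiplicative.ofAdd (1:ZMod 4)) ≠ 1)]] at h1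
  · intro hT g
    have hcases : ∀ z : ZMod 4, z = 0 ∨ z = 1 ∨ z = 2 ∨ z = 3 := by decide
    have hgeq : g = Multiplicative.ofAdd (Multiplicative.toAdd g) := rfl
    rcases hcases (Multiplicative.toAdd g) with h | h | h | h
    · rw [hgeq, h, rho_coe, show ((Multiplicative.toAdd (Multiplicative.ofAdd (0:ZMod 4))).val) = 0 by decide,
        pow_zero, show sigmaPow (modTwoHom4 (Multiplicative.ofAdd (0:ZMod 4))) T = T by
          unfold sigmaPow; rw [if_pos (by decide)], mul_one, one_mul]
    · rw [hgeq, h, rho_coe, show ((Multiplicative.toAdd (Multiplicative.ofAdd (1:ZMod 4))).val) = 1 by decide,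
        pow_one, show sigmaPow (modTwoHom4 (Multiplicative.ofAdd (1:ZMod 4))) T = conjMat T by
          unfold sigmaPow; rw [if_neg (by decide : modTwoHom4 (Multiplicative.ofAdd (1:ZMod 4)) ≠ 1)]]
      exact hT
    · rw [hgeq, h, rho_coe, show ((Multiplicative.toAdd (Multiplicative.ofAdd (2:ZMod 4))).val) = 2 by decide,
        pow_two, Jm_mul_Jm, show sigmaPow (modTwoHom4 (Multiplicative.ofAdd (2:ZMod 4))) T = T by
          unfold sigmaPow; rw [if_pos (by decide)], mul_neg, neg_mul, mul_one, one_mul]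
    · rw [hgeq, h, rho_coe, show ((Multiplicative.toAdd (Multiplicative.ofAdd (3:ZMod 4))).val) = 3 by decide,
        show (3:ℕ) = 2+1 from rfl, pow_succ, pow_two, Jm_mul_Jm, neg_one_mul,
        show sigmaPow (modTwoHom4 (Multiplicative.ofAdd (3:ZMod 4))) T = conjMat T by
          unfold sigmaPow; rw [if_neg (by decide : modTwoHom4 (Multiplicative.ofAdd (3:ZMod 4)) ≠ 1)],
        mul_neg, hT, neg_mul]

lemma fq_range : fq.range = MagEnd modTwoHom4 rho := by
  apply le_antisymm
  · rintro _ ⟨q, rfl⟩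
    show fq q ∈ MagEnd modTwoHom4 rho
    rw [mem_magEnd_iff, fq_entries]
    ext i j
    fin_cases i <;> fin_cases j <;>
      simp [conjMat, Matrix.mul_apply, Fin.sum_univ_two, Complex.ext_iff]
  · intro T hT
    rw [mem_magEnd_iff] at hT
    have h10 := congrFun (congrFun hT 1) 0
    have h11 := congrFun (congrFun hT 1) 1
    simp [conjMat, Matrix.mul_apply, Fin.sum_univ_two, Complex.ext_iff] at h10 h11
    refine ⟨⟨(T 0 0).re, (T 0 0).im, -(T 0 1).re, -(T 0 1).im⟩, ?_⟩
    show fq (⟨(T 0 0).re, (T 0 0).im, -(T 0 1).re, -(T 0 1).im⟩ : Quaternion ℝ) = T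
    refine (fq_entries _).trans ?_
    ext i j
    fin_cases i <;> fin_cases j <;>
      simp [Complex.ext_iff] <;> constructor <;> linarith [h10.1, h10.2, h11.1, h11.2]

def magEndEquiv : MagEnd modTwoHom4 rho ≃ₐ[ℝ] Quaternion ℝ :=
  ((AlgEquiv.ofInjective fq fq_inj).trans (Subalgebra.equivOfEq _ _ fq_range)).symm

theorem stmt19 :
    ∃ ρ : Multiplicative (ZMod 4) → Matrix.GeneralLinearGroup (Fin 2) ℂ,
      (IsMagneticRep modTwoHom4 ρ ∧
        (ρ (Multiplicative.ofAdd 1) : Matrix (Fin 2) (Fin 2) ℂ) = !![0, -1; 1, 0] ∧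
        IsIrredMagRep modTwoHom4 ρ ∧
        Nonempty (MagEnd modTwoHom4 ρ ≃ₐ[ℝ] Quaternion ℝ)) ∧
      ∀ ρ' : Multiplicative (ZMod 4) → Matrix.GeneralLinearGroup (Fin 2) ℂ,
        IsMagneticRep modTwoHom4 ρ' →
        (ρ' (Multiplicative.ofAdd 1) : Matrix (Fin 2) (Fin 2) ℂ) = !![0, -1; 1, 0] →
        ρ' = ρ := by
  refine ⟨rho, ⟨rho_isMag, ?_, rho_irred, ⟨magEndEquiv⟩⟩, fun ρ' hm h1 => rho_unique ρ' hm h1⟩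
  rw [rho_coe, show ((Multiplicative.toAdd (Multiplicative.ofAdd (1:ZMod 4))).val) = 1 by decide,
    pow_one]
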